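/- Let f: ℝⁿ⁺² → ℝ be symmetric in its first n arguments. Then symmetrizing f first over permutations exchanging the last variable with any of the first n variables, and then over permutations exchanging the penultimate variable with any of the other n+1 variables, yields the same function as performing these two symmetrization operations in the opposite order: Sym^{n+1,pen}(Sym^{n,last}(f)) = Sym^{n+1,last}(Sym^{n,pen}(f)). -/
import Mathlib


/-- The first `n` coordinates of `Fin (n+2)`. -/
def embF (n : ℕ) (i : Fin n) : Fin (n + 2) := ⟨i, by omega⟩

/-- The penultimate coordinate (`v`). -/
def penF (n : ℕ) : Fin (n + 2) := ⟨n, by omega⟩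

/-- The last coordinate (`u`). -/
def lastF (n : ℕ) : Fin (n + 2) := ⟨n + 1, by omega⟩

/-- `Sym^{n,pen}`: average of `f` and its compositions with the transpositions exchanging
one of the first `n` variables with the penultimate variable. -/
noncomputable def symNPen (n : ℕ) (f : (Fin (n + 2) → ℝ) → ℝ) : (Fin (n + 2) → ℝ) → ℝ :=
  fun x => (f x + ∑ i : Fin n, f (x ∘ Equiv.swap (embF n i) (penF n))) / (n + 1)

/-- `Sym^{n,last}`: average of `f` and its compositions with the transpositions exchanging
one of the first `n` variables with the last variable. -/
noncomputable def symNLast (n : ℕ) (f : (Fin (n + 2) → ℝ) → ℝ) : (Fin (n + 2) → ℝ) → ℝ :=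
  fun x => (f x + ∑ i : Fin n, f (x ∘ Equiv.swap (embF n i) (lastF n))) / (n + 1)

/-- `Sym^{n+1,pen}`: average over exchanging the penultimate variable with each of the
other `n+1` variables, including the identity (`swap (penF n) (penF n) = id`). -/
noncomputable def symN1Pen (n : ℕ) (f : (Fin (n + 2) → ℝ) → ℝ) : (Fin (n + 2) → ℝ) → ℝ :=
  fun x => (∑ j : Fin (n + 2), f (x ∘ Equiv.swap j (penF n))) / (n + 2)

/-- `Sym^{n+1,last}`: average over exchanging the last variable with each of the
other `n+1` variables, including the identity. -/
noncomputable def symN1Last (n : ℕ) (f : (Fin (n + 2) → ℝ) → ℝ) : (Fin (n + 2) → ℝ) → ℝ :=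
  fun x => (∑ j : Fin (n + 2), f (x ∘ Equiv.swap j (lastF n))) / (n + 2)
namespace Stmt7Aux

def E (n : ℕ) (a b : Fin (n + 2)) : Equiv.Perm (Fin (n + 2)) :=
  (Equiv.swap (penF n) a).trans (Equiv.swap (Equiv.swap (penF n) a (lastF n)) b)

lemma pen_ne_last (n : ℕ) : penF n ≠ lastF n := by
  simp [penF, lastF, Fin.ext_iff]

lemma embF_ne_pen (n : ℕ) (i : Fin n) : embF n i ≠ penF n := by
  intro h
  have := congrArg Fin.val h
  simp only [embF, penF] at this
  omega

lemma embF_ne_last (n : ℕ) (i : Fin n) : embF n i ≠ lastF n := by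
  intro h
  have := congrArg Fin.val h
  simp only [embF, lastF] at this
  omega

lemma E_last (n : ℕ) (a b : Fin (n + 2)) : E n a b (lastF n) = b := by
  simp [E, Equiv.trans_apply]

lemma E_pen (n : ℕ) (a b : Fin (n + 2)) (hab : a ≠ b) : E n a b (penF n) = a := by
  have hc : a ≠ Equiv.swap (penF n) a (lastF n) := by
    intro h
    have := (Equiv.swap (penF n) a).injective ((Equiv.swap_apply_left (penF n) a).trans h)
    exact pen_ne_last n this
  simp only [E, Equiv.trans_apply, Equiv.swap_apply_left]
  exact Equiv.swap_apply_of_ne_of_ne hc hab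

noncomputable def gE {n : ℕ} (f : (Fin (n + 2) → ℝ) → ℝ) (x : Fin (n + 2) → ℝ)
    (a b : Fin (n + 2)) : ℝ :=
  if a = b then 0 else f (x ∘ E n a b)

lemma toG {n : ℕ} {f : (Fin (n + 2) → ℝ) → ℝ}
    (hsym : ∀ σ : Equiv.Perm (Fin (n + 2)), σ (penF n) = penF n → σ (lastF n) = lastF n →
      ∀ x : Fin (n + 2) → ℝ, f (x ∘ σ) = f x)
    (x : Fin (n + 2) → ℝ) (σ : Equiv.Perm (Fin (n + 2))) :
    f (x ∘ σ) = gE f x (σ (penF n)) (σ (lastF n)) := by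
  have hne : σ (penF n) ≠ σ (lastF n) := σ.injective.ne (pen_ne_last n)
  rw [gE, if_neg hne]
  set τ := E n (σ (penF n)) (σ (lastF n)) with hτ
  have h1 : τ (penF n) = σ (penF n) := E_pen n _ _ hne
  have h2 : τ (lastF n) = σ (lastF n) := E_last n _ _
  have hp : (σ.trans τ.symm) (penF n) = penF n := by
    rw [Equiv.trans_apply, ← h1, Equiv.symm_apply_apply]
  have hl : (σ.trans τ.symm) (lastF n) = lastF n := by
    rw [Equiv.trans_apply, ← h2, Equiv.symm_apply_apply]
  have h := hsym (σ.trans τ.symm) hp hl (x ∘ τ)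
  rw [← h]
  congr 1
  ext t
  simp [Equiv.trans_apply, Function.comp]


def psi (n : ℕ) (p l j : Fin (n + 2)) : Option (Option (Fin n)) → Fin (n + 2)
  | none => j
  | some none => if j = l then p else l
  | some (some i) => if embF n i = j then p else embF n i

lemma embF_inj {n : ℕ} {i i' : Fin n} (h : embF n i = embF n i') : i = i' := by
  have := congrArg Fin.val h
  simp only [embF] at this
  exact Fin.ext this

lemma psi_bij (n : ℕ) (p l j : Fin (n + 2)) (hpl : p ≠ l)
    (hp : ∀ i : Fin n, embF n i ≠ p) (hl : ∀ i : Fin n, embF n i ≠ l) :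
    Function.Bijective (psi n p l j) := by
  rw [Fintype.bijective_iff_injective_and_card]
  refine ⟨?_, by simp⟩
  intro o o' h
  rcases o with _ | _ | i <;> rcases o' with _ | _ | i' <;>
    simp only [psi] at h
  · rfl
  · -- j = if j = l then p else l
    split_ifs at h with hc
    · exact absurd (hc.symm.trans h) hpl.symm
    · exact absurd h hc
  · -- j = if embF i' = j then p else embF i'
    split_ifs at h with hc
    · exact absurd (hc.trans h) (hp i')
    · exact absurd h.symm hc
  · split_ifs at h with hc
    · exact absurd (hc.symm.trans h.symm) hpl.symm
    · exact absurd h.symm hc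
  · rfl
  · split_ifs at h with hc hc'
    · exact absurd (hc'.trans hc) (hl i')
    · exact absurd h.symm (hp i')
    · exact absurd h hpl.symm
    · exact absurd h.symm (hl i')
  · split_ifs at h with hc
    · exact absurd (hc.trans h.symm) (hp i)
    · exact absurd h hc
  · split_ifs at h with hc hc'
    · exact absurd (hc.trans hc') (hl i)
    · exact absurd h hpl
    · exact absurd h (hp i)
    · exact absurd h (hl i)
  · split_ifs at h with hc hc'
    · exact congrArg (some ∘ some) (embF_inj ((hc.trans hc'.symm)))
    · exact absurd h.symm (hp i')
    · exact absurd h (hp i)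
    · exact congrArg (some ∘ some) (embF_inj h)

lemma sum_psi {n : ℕ} (p l j : Fin (n + 2)) (hpl : p ≠ l)
    (hp : ∀ i : Fin n, embF n i ≠ p) (hl : ∀ i : Fin n, embF n i ≠ l)
    (g : Fin (n + 2) → ℝ) :
    ∑ b : Fin (n + 2), g b =
      g j + (g (if j = l then p else l)
        + ∑ i : Fin n, g (if embF n i = j then p else embF n i)) := by
  rw [← Fintype.sum_bijective (psi n p l j) (psi_bij n p l j hpl hp hl)
    (fun o => g (psi n p l j o)) g (fun o => rfl)]
  rw [Fintype.sum_option, Fintype.sum_option]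
  rfl


lemma lemL {n : ℕ} {f : (Fin (n + 2) → ℝ) → ℝ}
    (hsym : ∀ σ : Equiv.Perm (Fin (n + 2)), σ (penF n) = penF n → σ (lastF n) = lastF n →
      ∀ x : Fin (n + 2) → ℝ, f (x ∘ σ) = f x)
    (x : Fin (n + 2) → ℝ) (j : Fin (n + 2)) :
    f (x ∘ Equiv.swap j (penF n)) +
      ∑ i : Fin n, f ((x ∘ Equiv.swap j (penF n)) ∘ Equiv.swap (embF n i) (lastF n)) =
    ∑ b : Fin (n + 2), gE f x j b := by
  have hcomp : ∀ i : Fin n,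
      ((x ∘ ⇑(Equiv.swap j (penF n))) ∘ ⇑(Equiv.swap (embF n i) (lastF n)))
        = x ∘ ⇑((Equiv.swap (embF n i) (lastF n)).trans (Equiv.swap j (penF n))) := by
    intro i; ext t; simp [Equiv.trans_apply, Function.comp]
  simp only [hcomp]
  rw [toG hsym x, Finset.sum_congr rfl (fun i _ => toG hsym x
    ((Equiv.swap (embF n i) (lastF n)).trans (Equiv.swap j (penF n))))]
  have h1 : Equiv.swap j (penF n) (penF n) = j := Equiv.swap_apply_right _ _
  have h2 : Equiv.swap j (penF n) (lastF n) = if j = lastF n then penF n else lastF n := by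
    rcases eq_or_ne j (lastF n) with h | h
    · subst h; simp
    · rw [if_neg h, Equiv.swap_apply_of_ne_of_ne (Ne.symm h) (Ne.symm (pen_ne_last n))]
  have h3 : ∀ i : Fin n,
      ((Equiv.swap (embF n i) (lastF n)).trans (Equiv.swap j (penF n))) (penF n) = j := by
    intro i
    rw [Equiv.trans_apply,
      Equiv.swap_apply_of_ne_of_ne (Ne.symm (embF_ne_pen n i)) (pen_ne_last n),
      Equiv.swap_apply_right]
  have h4 : ∀ i : Fin n,
      ((Equiv.swap (embF n i) (lastF n)).trans (Equiv.swap j (penF n))) (lastF n)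
        = if embF n i = j then penF n else embF n i := by
    intro i
    rw [Equiv.trans_apply, Equiv.swap_apply_right]
    rcases eq_or_ne (embF n i) j with h | h
    · subst h; simp
    · rw [if_neg h, Equiv.swap_apply_of_ne_of_ne h (embF_ne_pen n i)]
  rw [h1, h2]
  rw [Finset.sum_congr rfl (fun i _ => by rw [h3 i, h4 i])]
  rw [sum_psi (penF n) (lastF n) j (pen_ne_last n) (embF_ne_pen n) (embF_ne_last n)
    (gE f x j)]
  have h0 : gE f x j j = 0 := if_pos rfl
  rw [h0, zero_add]

lemma lemR {n : ℕ} {f : (Fin (n + 2) → ℝ) → ℝ}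
    (hsym : ∀ σ : Equiv.Perm (Fin (n + 2)), σ (penF n) = penF n → σ (lastF n) = lastF n →
      ∀ x : Fin (n + 2) → ℝ, f (x ∘ σ) = f x)
    (x : Fin (n + 2) → ℝ) (j : Fin (n + 2)) :
    f (x ∘ Equiv.swap j (lastF n)) +
      ∑ i : Fin n, f ((x ∘ Equiv.swap j (lastF n)) ∘ Equiv.swap (embF n i) (penF n)) =
    ∑ a : Fin (n + 2), gE f x a j := by
  have hcomp : ∀ i : Fin n,
      ((x ∘ ⇑(Equiv.swap j (lastF n))) ∘ ⇑(Equiv.swap (embF n i) (penF n)))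
        = x ∘ ⇑((Equiv.swap (embF n i) (penF n)).trans (Equiv.swap j (lastF n))) := by
    intro i; ext t; simp [Equiv.trans_apply, Function.comp]
  simp only [hcomp]
  rw [toG hsym x, Finset.sum_congr rfl (fun i _ => toG hsym x
    ((Equiv.swap (embF n i) (penF n)).trans (Equiv.swap j (lastF n))))]
  have h1 : Equiv.swap j (lastF n) (lastF n) = j := Equiv.swap_apply_right _ _
  have h2 : Equiv.swap j (lastF n) (penF n) = if j = penF n then lastF n else penF n := by
    rcases eq_or_ne j (penF n) with h | h
    · subst h; simp
    · rw [if_neg h, Equiv.swap_apply_of_ne_of_ne (Ne.symm h) (pen_ne_last n)]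
  have h3 : ∀ i : Fin n,
      ((Equiv.swap (embF n i) (penF n)).trans (Equiv.swap j (lastF n))) (lastF n) = j := by
    intro i
    rw [Equiv.trans_apply,
      Equiv.swap_apply_of_ne_of_ne (Ne.symm (embF_ne_last n i)) (Ne.symm (pen_ne_last n)),
      Equiv.swap_apply_right]
  have h4 : ∀ i : Fin n,
      ((Equiv.swap (embF n i) (penF n)).trans (Equiv.swap j (lastF n))) (penF n)
        = if embF n i = j then lastF n else embF n i := by
    intro i
    rw [Equiv.trans_apply, Equiv.swap_apply_right]
    rcases eq_or_ne (embF n i) j with h | h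
    · subst h; simp
    · rw [if_neg h, Equiv.swap_apply_of_ne_of_ne h (embF_ne_last n i)]
  rw [h1, h2]
  rw [Finset.sum_congr rfl (fun i _ => by rw [h3 i, h4 i])]
  rw [sum_psi (lastF n) (penF n) j (Ne.symm (pen_ne_last n)) (embF_ne_last n)
    (embF_ne_pen n) (fun a => gE f x a j)]
  have h0 : gE f x j j = 0 := if_pos rfl
  rw [h0, zero_add]

end Stmt7Aux

/-- For `f : ℝ^{n+2} → ℝ` symmetric in its first `n` arguments, the two
iterated symmetrizations commute: `Sym^{n+1,pen}(Sym^{n,last}(f)) = Sym^{n+1,last}(Sym^{n,pen}(f))`. -/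
theorem stmt7 (n : ℕ) (f : (Fin (n + 2) → ℝ) → ℝ)
    (hsym : ∀ σ : Equiv.Perm (Fin (n + 2)), σ (penF n) = penF n → σ (lastF n) = lastF n →
      ∀ x : Fin (n + 2) → ℝ, f (x ∘ σ) = f x) :
    symN1Pen n (symNLast n f) = symN1Last n (symNPen n f) := by
  funext x
  simp only [symN1Pen, symN1Last, symNPen, symNLast]
  have e1 : ∀ j : Fin (n + 2),
      (f (x ∘ ⇑(Equiv.swap j (penF n))) + ∑ i : Fin n,
        f ((x ∘ ⇑(Equiv.swap j (penF n))) ∘ ⇑(Equiv.swap (embF n i) (lastF n)))) / ((n : ℝ) + 1)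
      = (∑ b : Fin (n + 2), Stmt7Aux.gE f x j b) / ((n : ℝ) + 1) := fun j => by
    rw [Stmt7Aux.lemL hsym x j]
  have e2 : ∀ j : Fin (n + 2),
      (f (x ∘ ⇑(Equiv.swap j (lastF n))) + ∑ i : Fin n,
        f ((x ∘ ⇑(Equiv.swap j (lastF n))) ∘ ⇑(Equiv.swap (embF n i) (penF n)))) / ((n : ℝ) + 1)
      = (∑ a : Fin (n + 2), Stmt7Aux.gE f x a j) / ((n : ℝ) + 1) := fun j => by
    rw [Stmt7Aux.lemR hsym x j]
  rw [Finset.sum_congr rfl fun j _ => e1 j, Finset.sum_congr rfl fun j _ => e2 j]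
  rw [← Finset.sum_div, ← Finset.sum_div, Finset.sum_comm]
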